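/- arXiv:math/0510631 — 3 statements merged into one kernel-verified Lean document; each statement's English description precedes it below -/
import Mathlib

section
/- Let Γ = A *_C B and let γ ∈ Γ be cyclically reduced. If γ = h c h^{-1} for some c ∈ C and some h ∈ Γ with reduced form h = h_1 h_2 ⋯ h_{n+1} (n ≥ 0), then γ lies in one of the factors A or B, and there exists a finite sequence c_0, c_1, …, c_n, c_{n+1} of elements of Γ with c_0 = c, c_{n+1} = γ, c_i ∈ C for all 0 ≤ i ≤ n, and such that for each i = 0, …, n the element h_{i+1} conjugates c_i to c_{i+1}, the conjugation taking place inside a single factor A or B. -/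
/-!
Internal characterization of the amalgamated free product `Γ = A *_C B`:
`A` and `B` are subgroups of `Γ` generating `Γ`, the amalgamated subgroup is
`C = A ⊓ B`, and (normal form theorem) the product of any nonempty reduced
sequence is nontrivial.
-/

variable {Γ : Type*} [Group Γ]

/-- `x` and `y` lie in different factors among `A`, `B`. -/
def DiffFactors (A B : Subgroup Γ) (x y : Γ) : Prop :=
  ¬(x ∈ A ∧ y ∈ A) ∧ ¬(x ∈ B ∧ y ∈ B)

/-- A reduced sequence: every entry lies in `(A ∪ B) \ (A ⊓ B)` and consecutive
entries lie in different factors. -/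
def ReducedSeq (A B : Subgroup Γ) (l : List Γ) : Prop :=
  (∀ g ∈ l, (g ∈ A ∨ g ∈ B) ∧ ¬(g ∈ A ∧ g ∈ B)) ∧ l.Chain' (DiffFactors A B)

/-- `Γ` is the amalgamated free product of its subgroups `A` and `B`
along `C = A ⊓ B`. -/
def IsAmalgam (A B : Subgroup Γ) : Prop :=
  A ⊔ B = ⊤ ∧ ∀ l : List Γ, ReducedSeq A B l → l ≠ [] → l.prod ≠ 1

/-- `g` is cyclically reduced: it has length 1 (it lies in a factor), or it has
a reduced form of length `≥ 2` whose first and last entries lie in different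
factors. -/
def AmCyclicallyReduced (A B : Subgroup Γ) (g : Γ) : Prop :=
  (g ∈ A ∨ g ∈ B) ∨
    ∃ l : List Γ, ReducedSeq A B l ∧ l.prod = g ∧ 2 ≤ l.length ∧
      ∃ x y, l.head? = some x ∧ l.getLast? = some y ∧ DiffFactors A B x y

/-!
Let `c_k` be `co` conjugated by the product of the last `k` letters of `h`, and suppose
`c_k ∈ C`. If the next letter `s` lies in the factor `F`, then `c_{k+1} = s c_k s⁻¹ ∈ F`. Were
`c_{k+1} ∉ C`, then, writing `P` for the (nonempty) remaining prefix of `h`, the word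
`P ++ [c_{k+1}] ++ P⁻¹` would be a reduced form of `γ` of length at least three that begins and
ends in the same factor. By the normal form theorem a reduced form of length at least two never
represents an element of a factor, and the factors of its first and last letters depend only on
its product, so `γ` would not be cyclically reduced. Hence all `c_k` with `k ≤ n` lie in `C`, and
`γ = c_{n+1}` lies in the factor of `h_1`.
-/

namespace DiffFactors

variable {A B : Subgroup Γ} {x y : Γ}

theorem symm (h : DiffFactors A B x y) : DiffFactors A B y x :=
  ⟨fun hh => h.1 hh.symm, fun hh => h.2 hh.symm⟩

theorem swap (h : DiffFactors A B x y) : DiffFactors B A x y := ⟨h.2, h.1⟩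

@[simp]
theorem inv_left_iff : DiffFactors A B x⁻¹ y ↔ DiffFactors A B x y := by
  simp only [DiffFactors, inv_mem_iff]

@[simp]
theorem inv_right_iff : DiffFactors A B x y⁻¹ ↔ DiffFactors A B x y := by
  simp only [DiffFactors, inv_mem_iff]

end DiffFactors

section

variable {A B : Subgroup Γ}

theorem reducedSeq_append_iff {l m : List Γ} :
    ReducedSeq A B (l ++ m) ↔ ReducedSeq A B l ∧ ReducedSeq A B m ∧
      ∀ x ∈ l.getLast?, ∀ y ∈ m.head?, DiffFactors A B x y := by
  constructor
  · rintro ⟨hmem, hchain⟩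
    obtain ⟨hl, hm, hjunc⟩ := List.isChain_append.1 hchain
    exact ⟨⟨fun g hg => hmem g (List.mem_append_left m hg), hl⟩,
      ⟨fun g hg => hmem g (List.mem_append_right l hg), hm⟩, hjunc⟩
  · rintro ⟨hl, hm, hjunc⟩
    exact ⟨fun g hg => (List.mem_append.1 hg).elim (hl.1 g) (hm.1 g), hl.2.append hm.2 hjunc⟩

theorem reducedSeq_singleton {g : Γ} :
    ReducedSeq A B [g] ↔ (g ∈ A ∨ g ∈ B) ∧ ¬(g ∈ A ∧ g ∈ B) :=
  ⟨fun h => h.1 g (List.mem_singleton_self g),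
    fun h => ⟨by simpa using h, List.isChain_singleton g⟩⟩

theorem reducedSeq_cons_iff {g : Γ} {l : List Γ} :
    ReducedSeq A B (g :: l) ↔ ((g ∈ A ∨ g ∈ B) ∧ ¬(g ∈ A ∧ g ∈ B)) ∧ ReducedSeq A B l ∧
      ∀ y ∈ l.head?, DiffFactors A B g y := by
  rw [← List.singleton_append, reducedSeq_append_iff, reducedSeq_singleton]
  simp

theorem ReducedSeq.swap {l : List Γ} (h : ReducedSeq A B l) : ReducedSeq B A l :=
  ⟨fun g hg => ⟨(h.1 g hg).1.symm, fun hh => (h.1 g hg).2 hh.symm⟩,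
    List.IsChain.imp (fun _ _ hd => hd.swap) h.2⟩

theorem IsAmalgam.swap (h : IsAmalgam A B) : IsAmalgam B A :=
  ⟨sup_comm A B ▸ h.1, fun l hl => h.2 l hl.swap⟩

theorem ReducedSeq.inv_reverse {l : List Γ} (h : ReducedSeq A B l) :
    ReducedSeq A B (l.map (·⁻¹)).reverse := by
  refine ⟨?_, ?_⟩
  · simp only [List.mem_reverse, List.mem_map, forall_exists_index, and_imp,
      forall_apply_eq_imp_iff₂, inv_mem_iff]
    exact h.1
  · exact List.isChain_reverse.2 <| (List.isChain_map _).2 <|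
      h.2.imp fun _ _ hd => by simpa using hd.symm

theorem ReducedSeq.mul_head {c g : Γ} {l : List Γ} (hc : c ∈ A ⊓ B)
    (h : ReducedSeq A B (g :: l)) : ReducedSeq A B (c * g :: l) := by
  have hA : c * g ∈ A ↔ g ∈ A := Subgroup.mul_mem_cancel_left _ hc.1
  have hB : c * g ∈ B ↔ g ∈ B := Subgroup.mul_mem_cancel_left _ hc.2
  simp only [reducedSeq_cons_iff, DiffFactors, hA, hB] at h ⊢
  exact h

namespace IsAmalgam

theorem mul_cons_prod_ne_one_of_mem (hAB : IsAmalgam A B) {x g : Γ} {l : List Γ} (hx : x ∈ A)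
    (hg : g ∈ A) (hl : ReducedSeq A B (g :: l)) (hne : l ≠ []) : x * (g :: l).prod ≠ 1 := by
  obtain ⟨g₂, t, rfl⟩ := List.exists_cons_of_ne_nil hne
  obtain ⟨-, htail, hjunc⟩ := reducedSeq_cons_iff.1 hl
  have hg₂ : g₂ ∉ A := fun h => (hjunc g₂ rfl).1 ⟨hg, h⟩
  by_cases hxg : x * g ∈ B
  · refine fun h => hAB.2 (x * g * g₂ :: t) (htail.mul_head ⟨mul_mem hx hg, hxg⟩)
      (List.cons_ne_nil _ _) ?_
    simpa [mul_assoc] using h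
  · have hred : ReducedSeq A B (x * g :: g₂ :: t) :=
      reducedSeq_cons_iff.2 ⟨⟨Or.inl (mul_mem hx hg), fun h => hxg h.2⟩, htail,
        fun _ hy => Option.some_inj.1 hy ▸ ⟨fun h => hg₂ h.2, fun h => hxg h.1⟩⟩
    refine fun h => hAB.2 _ hred (List.cons_ne_nil _ _) ?_
    simpa [mul_assoc] using h

/-- Absorbing an element of a factor shortens a reduced word by at most one letter. -/
theorem mul_prod_ne_one (hAB : IsAmalgam A B) {x : Γ} (hx : x ∈ A ∨ x ∈ B) {l : List Γ}
    (hl : ReducedSeq A B l) (hlen : 2 ≤ l.length) : x * l.prod ≠ 1 := by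
  obtain ⟨g, t, rfl⟩ := List.exists_cons_of_ne_nil (List.ne_nil_of_length_pos (l := l) (by omega))
  have hne : t ≠ [] := List.ne_nil_of_length_pos (by simp at hlen; omega)
  by_cases hd : DiffFactors A B x g
  · have hg := (hl.1 g List.mem_cons_self).1
    have hxC : ¬(x ∈ A ∧ x ∈ B) := fun h =>
      hg.elim (fun hgA => hd.1 ⟨h.1, hgA⟩) (fun hgB => hd.2 ⟨h.2, hgB⟩)
    refine fun h => hAB.2 (x :: g :: t) (reducedSeq_cons_iff.2 ⟨⟨hx, hxC⟩, hl,
      fun _ hy => Option.some_inj.1 hy ▸ hd⟩) (List.cons_ne_nil _ _) ?_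
    simpa using h
  · rcases not_and_or.1 hd with hA | hB
    · exact hAB.mul_cons_prod_ne_one_of_mem (not_not.1 hA).1 (not_not.1 hA).2 hl hne
    · exact hAB.swap.mul_cons_prod_ne_one_of_mem (not_not.1 hB).1 (not_not.1 hB).2 hl.swap hne

theorem prod_notMem (hAB : IsAmalgam A B) {l : List Γ} (hl : ReducedSeq A B l)
    (hlen : 2 ≤ l.length) : l.prod ∉ A := fun h =>
  hAB.mul_prod_ne_one (Or.inl (inv_mem h)) hl hlen (inv_mul_cancel _)

theorem not_diffFactors_heads (hAB : IsAmalgam A B) {l m : List Γ} (hl : ReducedSeq A B l)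
    (hm : ReducedSeq A B m) (hprod : l.prod = m.prod) {x y : Γ} (hx : x ∈ l.head?)
    (hy : y ∈ m.head?) : ¬DiffFactors A B x y := by
  intro hd
  refine hAB.2 ((m.map (·⁻¹)).reverse ++ l) (reducedSeq_append_iff.2 ⟨hm.inv_reverse, hl, ?_⟩)
    (by simp [List.ne_nil_of_mem (List.mem_of_mem_head? hx)]) ?_
  · simp only [List.getLast?_reverse, List.head?_map, Option.mem_def.1 hy, Option.map_some,
      Option.mem_def, Option.some.injEq]
    rintro _ rfl _ hv
    cases Option.mem_unique hv hx
    simpa using hd.symm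
  · rw [List.prod_append, ← List.prod_inv_reverse, hprod, inv_mul_cancel]

theorem not_diffFactors_lasts (hAB : IsAmalgam A B) {l m : List Γ} (hl : ReducedSeq A B l)
    (hm : ReducedSeq A B m) (hprod : l.prod = m.prod) {x y : Γ} (hx : x ∈ l.getLast?)
    (hy : y ∈ m.getLast?) : ¬DiffFactors A B x y := by
  intro hd
  refine hAB.2 (l ++ (m.map (·⁻¹)).reverse) (reducedSeq_append_iff.2 ⟨hl, hm.inv_reverse, ?_⟩)
    (by simp [List.ne_nil_of_mem (List.mem_of_mem_getLast? hx)]) ?_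
  · simp only [List.head?_reverse, List.getLast?_map, Option.mem_def.1 hy, Option.map_some,
      Option.mem_def, Option.some.injEq]
    rintro _ hu _ rfl
    cases Option.mem_unique hu hx
    simpa using hd
  · rw [List.prod_append, ← List.prod_inv_reverse, hprod, mul_inv_cancel]

theorem not_amCyclicallyReduced_prod (hAB : IsAmalgam A B) {w : List Γ} (hw : ReducedSeq A B w)
    (hlen : 2 ≤ w.length) {p q : Γ} (hp : p ∈ w.head?) (hq : q ∈ w.getLast?)
    (hpq : ¬DiffFactors A B p q) : ¬AmCyclicallyReduced A B w.prod := by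
  rintro (hfac | ⟨l, hl, hprod, -, a, b, ha, hb, hab⟩)
  · exact hfac.elim (hAB.prod_notMem hw hlen) (hAB.swap.prod_notMem hw.swap hlen)
  · have hap := hAB.not_diffFactors_heads hl hw hprod ha hp
    have hbq := hAB.not_diffFactors_lasts hl hw hprod hb hq
    have hpC := hw.1 p (List.mem_of_mem_head? hp)
    have hqC := hw.1 q (List.mem_of_mem_getLast? hq)
    unfold DiffFactors at hab hap hbq hpq
    tauto

theorem not_amCyclicallyReduced_conj (hAB : IsAmalgam A B) {P : List Γ} {x : Γ}
    (hP : ReducedSeq A B (P ++ [x])) (hPne : P ≠ []) :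
    ¬AmCyclicallyReduced A B (P.prod * x * P.prod⁻¹) := by
  obtain ⟨p, P, rfl⟩ := List.exists_cons_of_ne_nil hPne
  obtain ⟨hPred, -, hjunc⟩ := reducedSeq_append_iff.1 hP
  have hw : ReducedSeq A B (p :: P ++ [x] ++ ((p :: P).map (·⁻¹)).reverse) := by
    refine reducedSeq_append_iff.2 ⟨hP, hPred.inv_reverse, ?_⟩
    simp only [List.getLast?_concat, List.head?_reverse, List.getLast?_map, Option.mem_def,
      Option.some.injEq, Option.map_eq_some_iff]
    rintro _ rfl _ ⟨u, hu, rfl⟩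
    simpa using (hjunc u hu x rfl).symm
  have hp := (hPred.1 p List.mem_cons_self).1
  have := hAB.not_amCyclicallyReduced_prod hw (by simp; omega) (p := p) (q := p⁻¹)
    (by simp)
    (by rw [List.map_cons, List.reverse_cons, ← List.append_assoc, List.getLast?_concat]; rfl)
    (by simp [DiffFactors]; tauto)
  simpa [List.prod_append, ← List.prod_inv_reverse, mul_assoc] using this

theorem conj_suffix_prod_mem_inf (hAB : IsAmalgam A B) {γ co : Γ}
    (hγ : AmCyclicallyReduced A B γ) (hco : co ∈ A ⊓ B) {S : List Γ} :
    ∀ {P : List Γ}, ReducedSeq A B (P ++ S) → P ≠ [] →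
      γ = (P ++ S).prod * co * (P ++ S).prod⁻¹ → S.prod * co * S.prod⁻¹ ∈ A ⊓ B := by
  induction S with
  | nil => exact fun _ _ _ => by simpa using hco
  | cons s S ih =>
    intro P hred hPne hconj
    have hc := ih (P := P ++ [s]) (by simpa using hred) (by simp) (by simpa using hconj)
    obtain ⟨hPred, hsS, hjunc⟩ := reducedSeq_append_iff.1 hred
    obtain ⟨hs, -, -⟩ := reducedSeq_cons_iff.1 hsS
    set d := s * (S.prod * co * S.prod⁻¹) * s⁻¹
    have hdA : s ∈ A → d ∈ A := fun h => mul_mem (mul_mem h hc.1) (inv_mem h)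
    have hdB : s ∈ B → d ∈ B := fun h => mul_mem (mul_mem h hc.2) (inv_mem h)
    have hsd : (s :: S).prod * co * (s :: S).prod⁻¹ = d := by simp [d, mul_assoc]
    rw [hsd]
    by_contra hdC
    refine hAB.not_amCyclicallyReduced_conj (x := d) (reducedSeq_append_iff.2 ⟨hPred,
      reducedSeq_singleton.2 ⟨hs.1.imp hdA hdB, fun h => hdC h⟩, ?_⟩) hPne ?_
    · rintro u hu _ hv
      obtain rfl := Option.some_inj.1 hv
      have hus := hjunc u hu s rfl
      unfold DiffFactors at hus ⊢
      tauto
    · convert hγ using 1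
      rw [hconj, List.prod_append, ← hsd]
      group

end IsAmalgam

end

/-- Conjugation theorem in an amalgam, case (i): if the cyclically reduced
element `γ` equals `h * co * h⁻¹` with `co ∈ C = A ⊓ B` and `h` of reduced form
`h_1 h_2 ⋯ h_{n+1}`, then `γ` lies in a factor and there is a chain
`co = c_0, c_1, …, c_n, c_{n+1} = γ` of elements of `C` (except possibly the
last) in which consecutive terms are conjugate by one of the `h_i`, the
conjugation taking place inside a single factor. -/
theorem amalgam_conj_into_amalgamated_subgroup (A B : Subgroup Γ)
    (hAB : IsAmalgam A B) (γ co h : Γ) (n : ℕ) (hs : Fin (n + 1) → Γ)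
    (hred : ReducedSeq A B (List.ofFn hs))
    (hprod : (List.ofFn hs).prod = h)
    (hcyc : AmCyclicallyReduced A B γ)
    (hco : co ∈ A ⊓ B)
    (hconj : γ = h * co * h⁻¹) :
    (γ ∈ A ∨ γ ∈ B) ∧
      ∃ c : ℕ → Γ, c 0 = co ∧ c (n + 1) = γ ∧ (∀ i ≤ n, c i ∈ A ⊓ B) ∧
        ∀ i : Fin (n + 1),
          c (n + 1 - (i : ℕ)) = hs i * c (n - (i : ℕ)) * (hs i)⁻¹ ∧
          ((hs i ∈ A ∧ c (n - (i : ℕ)) ∈ A ∧ c (n + 1 - (i : ℕ)) ∈ A) ∨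
           (hs i ∈ B ∧ c (n - (i : ℕ)) ∈ B ∧ c (n + 1 - (i : ℕ)) ∈ B)) := by
  set L := List.ofFn hs
  let c : ℕ → Γ := fun k => (L.drop (n + 1 - k)).prod * co * (L.drop (n + 1 - k)).prod⁻¹
  have hL : L.length = n + 1 := List.length_ofFn
  have hc0 : c 0 = co := by simp [c, List.drop_eq_nil_of_le hL.le]
  have hcn : c (n + 1) = γ := by simp [c, hprod, hconj]
  have hstep (i : Fin (n + 1)) : c (n + 1 - i) = hs i * c (n - i) * (hs i)⁻¹ := by
    have hdrop : L.drop i = hs i :: L.drop (i + 1) := by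
      rw [List.drop_eq_getElem_cons (by omega)]
      simp only [L, List.getElem_ofFn]
    have := i.isLt
    simp only [c, show n + 1 - (n + 1 - i) = i by omega, show n + 1 - (n - i) = i + 1 by omega,
      hdrop, List.prod_cons]
    group
  have hC (k : ℕ) (hk : k ≤ n) : c k ∈ A ⊓ B := by
    have hP : L.take (n + 1 - k) ≠ [] :=
      List.ne_nil_of_length_pos (by simp only [List.length_take, hL]; omega)
    exact hAB.conj_suffix_prod_mem_inf hcyc hco (by simpa using hred) hP
      (by simpa [hprod] using hconj)
  have hfactor (i : Fin (n + 1)) :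
      (hs i ∈ A ∧ c (n - i) ∈ A ∧ c (n + 1 - i) ∈ A) ∨
        (hs i ∈ B ∧ c (n - i) ∈ B ∧ c (n + 1 - i) ∈ B) := by
    have hci := hC (n - i) (by omega)
    rw [hstep]
    exact ((hred.1 (hs i) (List.mem_ofFn.2 ⟨i, rfl⟩)).1).imp
      (fun h => ⟨h, hci.1, mul_mem (mul_mem h hci.1) (inv_mem h)⟩)
      (fun h => ⟨h, hci.2, mul_mem (mul_mem h hci.2) (inv_mem h)⟩)
  refine ⟨?_, c, hc0, hcn, hC, fun i => ⟨hstep i, hfactor i⟩⟩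
  rcases hfactor 0 with ⟨-, -, h⟩ | ⟨-, -, h⟩
  · exact Or.inl (by simpa [hcn] using h)
  · exact Or.inr (by simpa [hcn] using h)
end

section
/- Let Γ = A*_φ and let γ ∈ Γ be cyclically reduced. If γ = h c h^{-1} for some c ∈ C_{+1} ∪ C_{-1} and some h ∈ Γ with reduced form h = h_1 t^{ε_1} h_2 ⋯ t^{ε_p} h_{p+1}, then γ ∈ A, and there exists a finite sequence (c_0, c_1, …, c_{2p}) of elements of C_{+1} ∪ C_{-1} such that c_{2p} = c, γ = h_1 c_0 h_1^{-1}, and for all i = 0, …, p−1: c_{2i+1} = h_{i+2} c_{2i+2} h_{i+2}^{-1} and c_{2i} = t^{ε_{i+1}} c_{2i+1} t^{-ε_{i+1}}. -/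
/-!
Internal characterization of the HNN extension `Γ = A*_φ`:
`A` is a subgroup of `Γ`, `t ∈ Γ` is the stable letter, `Cm = C_{-1}` and
`Cp = C_{+1}` are subgroups of `A` with `t⁻¹ Cm t = Cp` (so
`φ(c) = t⁻¹ c t` for `c ∈ Cm`), `A ∪ {t}` generates `Γ`, and Britton's lemma
holds: a reduced word `g₀ t^{ε₁} g₁ ⋯ t^{εₙ} gₙ` with `n ≥ 1` is nontrivial.
-/

variable {Γ : Type*} [Group Γ]

/-- The subgroup `C_ε` : `C_{+1} = Cp` when `ε = 1`, and `C_{-1} = Cm`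
otherwise. -/
def toCsub (Cm Cp : Subgroup Γ) (ε : ℤ) : Subgroup Γ := if ε = 1 then Cp else Cm

/-- The pair `(g₀, [(ε₁, g₁), …, (εₙ, gₙ)])` encodes the word
`g₀ t^{ε₁} g₁ ⋯ t^{εₙ} gₙ`; it is reduced when all `gᵢ ∈ A`, all `εᵢ = ±1`,
and it contains no pinch `t^{εᵢ} gᵢ t^{-εᵢ}` with `gᵢ ∈ C_{εᵢ}`. -/
def HNNReducedWord (A Cm Cp : Subgroup Γ) (g₀ : Γ) (w : List (ℤ × Γ)) : Prop :=
  g₀ ∈ A ∧ (∀ p ∈ w, (p.1 = 1 ∨ p.1 = -1) ∧ p.2 ∈ A) ∧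
    w.Chain' fun p q => q.1 = -p.1 → p.2 ∉ toCsub Cm Cp p.1

/-- The element of `Γ` represented by the word
`g₀ t^{ε₁} g₁ ⋯ t^{εₙ} gₙ`. -/
def hnnProd (t g₀ : Γ) (w : List (ℤ × Γ)) : Γ :=
  g₀ * (w.map fun p => t ^ p.1 * p.2).prod

/-- `Γ` is the HNN extension of its subgroup `A` relative to the isomorphism
`φ : Cm → Cp`, `φ(c) = t⁻¹ c t`, with stable letter `t`. -/
def IsHNN (A Cm Cp : Subgroup Γ) (t : Γ) : Prop :=
  Cm ≤ A ∧ Cp ≤ A ∧ (∀ c : Γ, c ∈ Cm ↔ t⁻¹ * c * t ∈ Cp) ∧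
    Subgroup.closure ((A : Set Γ) ∪ {t}) = ⊤ ∧
    ∀ g₀ w, HNNReducedWord A Cm Cp g₀ w → w ≠ [] → hnnProd t g₀ w ≠ 1

/-- `g` is cyclically reduced: `g ∈ A` (length 1), or `g` has a reduced form
`g₁ t^{ε₁} g₂ ⋯ gₙ t^{εₙ} gₙ₊₁` with `gₙ₊₁ = 1` and either `n = 1` or
`t^{εₙ} g₁ t^{ε₁}` is not a pinch. -/
def HNNCyclicallyReduced (A Cm Cp : Subgroup Γ) (t g : Γ) : Prop :=
  g ∈ A ∨
    ∃ g₀ w, HNNReducedWord A Cm Cp g₀ w ∧ hnnProd t g₀ w = g ∧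
      ∃ p q, w.head? = some q ∧ w.getLast? = some p ∧ p.2 = 1 ∧
        (w.length = 1 ∨ ¬(q.1 = -p.1 ∧ g₀ ∈ toCsub Cm Cp p.1))

/-!
Peel the letters of `h` off from the right. Suppose `γ = H t^e c' t^{-e} H⁻¹` with `c' ∈ A` but
`c' ∉ C_e`. Then `H · t^e c' t^{-e} · H⁻¹` is a reduced word for `γ` of positive length, starting
`a t^f ⋯` and ending `⋯ t^{-f} a⁻¹`. If `γ ∈ A` this contradicts Britton's lemma directly.
Otherwise let `g₀ t^{q₁} ⋯ t^{qₙ}` be a cyclically reduced form of `γ`: by Britton's lemma the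
words for `γ⁻¹ γ` and `γ γ⁻¹` must pinch where the two reduced words meet, which forces
`q₁ = f = -qₙ`, `g₀⁻¹ a ∈ C_{-f}` and `a ∈ C_{-f}`. For `n = 1` this contradicts `q₁ = ±1`,
for `n ≥ 2` it exhibits the forbidden pinch `t^{qₙ} g₀ t^{q₁}`. Hence `c' ∈ C_e`, so
`t^e c' t^{-e} ∈ C_{-e}` and the argument continues with the shorter conjugator `H`.
The chain `c` consists of the conjugates of `co` by the successive suffixes of `h`.
-/

section HNNWords

variable {A Cm Cp : Subgroup Γ} {t : Γ}

theorem toCsub_subset_union (e : ℤ) : (toCsub Cm Cp e : Set Γ) ⊆ Cp ∪ Cm := by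
  unfold toCsub
  split_ifs
  exacts [Set.subset_union_left, Set.subset_union_right]

theorem IsHNN.union_subset (hH : IsHNN A Cm Cp t) : (Cp : Set Γ) ∪ Cm ⊆ A :=
  Set.union_subset hH.2.1 hH.1

theorem IsHNN.toCsub_le (hH : IsHNN A Cm Cp t) (e : ℤ) : toCsub Cm Cp e ≤ A :=
  fun _ hx => hH.union_subset (toCsub_subset_union e hx)

theorem IsHNN.zpow_conj_mem_toCsub_neg (hH : IsHNN A Cm Cp t) {e : ℤ} (he : e = 1 ∨ e = -1)
    {x : Γ} (hx : x ∈ toCsub Cm Cp e) : t ^ e * x * (t ^ e)⁻¹ ∈ toCsub Cm Cp (-e) := by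
  rcases he with rfl | rfl
  · simp only [toCsub, if_pos, if_neg (by decide : (-1 : ℤ) ≠ 1)] at hx ⊢
    rw [zpow_one, hH.2.2.1, show t⁻¹ * (t * x * t⁻¹) * t = x by group]
    exact hx
  · simp only [toCsub, neg_neg, if_pos, if_neg (by decide : (-1 : ℤ) ≠ 1)] at hx ⊢
    rw [zpow_neg_one, inv_inv]
    exact (hH.2.2.1 x).1 hx

theorem IsHNN.hnnProd_ne_one (hH : IsHNN A Cm Cp t) {a : Γ} {w : List (ℤ × Γ)}
    (hw : HNNReducedWord A Cm Cp a w) (hne : w ≠ []) : hnnProd t a w ≠ 1 :=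
  hH.2.2.2.2 a w hw hne

@[simp] theorem hnnProd_nil (a : Γ) : hnnProd t a [] = a := by simp [hnnProd]

theorem hnnProd_cons (a : Γ) (e : ℤ) (g : Γ) (w : List (ℤ × Γ)) :
    hnnProd t a ((e, g) :: w) = a * t ^ e * hnnProd t g w := by
  simp [hnnProd, mul_assoc]

theorem hnnProd_append (a : Γ) (u v : List (ℤ × Γ)) :
    hnnProd t a (u ++ v) = hnnProd t a u * hnnProd t 1 v := by
  simp [hnnProd, mul_assoc]

theorem hnnProd_eq_mul (a : Γ) (w : List (ℤ × Γ)) : hnnProd t a w = a * hnnProd t 1 w := by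
  simp [hnnProd]

namespace HNNReducedWord

variable {a b : Γ} {u v : List (ℤ × Γ)}

theorem append (hu : HNNReducedWord A Cm Cp a u) (hv : HNNReducedWord A Cm Cp b v)
    (hj : ∀ x ∈ u.getLast?, ∀ y ∈ v.head?, y.1 = -x.1 → x.2 ∉ toCsub Cm Cp x.1) :
    HNNReducedWord A Cm Cp a (u ++ v) :=
  ⟨hu.1, fun p hp => (List.mem_append.1 hp).elim (hu.2.1 p) (hv.2.1 p),
    List.isChain_append.2 ⟨hu.2.2, hv.2.2, hj⟩⟩

theorem take (hu : HNNReducedWord A Cm Cp a u) (n : ℕ) :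
    HNNReducedWord A Cm Cp a (u.take n) :=
  ⟨hu.1, fun p hp => hu.2.1 p (List.mem_of_mem_take hp), hu.2.2.take n⟩

theorem of_cons {e : ℤ} {g : Γ} (h : HNNReducedWord A Cm Cp a ((e, g) :: u)) :
    HNNReducedWord A Cm Cp g u :=
  ⟨(h.2.1 (e, g) List.mem_cons_self).2, fun p hp => h.2.1 p (List.mem_cons_of_mem _ hp),
    h.2.2.tail⟩

/-- Pinch-freeness never looks at the group element of the second letter. -/
theorem replace_last {e : ℤ} {x y : Γ} (h : HNNReducedWord A Cm Cp a (u ++ [(e, x)]))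
    (hy : y ∈ A) : HNNReducedWord A Cm Cp a (u ++ [(e, y)]) := by
  obtain ⟨ha, hent, hch⟩ := h
  obtain ⟨hchu, -, hj⟩ := List.isChain_append.1 hch
  refine ⟨ha, fun p hp => ?_, List.isChain_append.2 ⟨hchu, List.isChain_singleton _, ?_⟩⟩
  · rcases List.mem_append.1 hp with hp | hp
    · exact hent p (List.mem_append_left _ hp)
    · obtain rfl := List.mem_singleton.1 hp
      exact ⟨(hent (e, x) (by simp)).1, hy⟩
  · simpa using fun p hp => hj p hp (e, x) rfl

end HNNReducedWord

/-- The word `gₙ⁻¹ t^{-εₙ} gₙ₋₁⁻¹ ⋯ t^{-ε₁} g₀⁻¹` for `g₀ t^{ε₁} g₁ ⋯ t^{εₙ} gₙ`. -/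
def invWord : Γ → List (ℤ × Γ) → Γ × List (ℤ × Γ)
  | a, [] => (a⁻¹, [])
  | a, (e, g) :: w => ((invWord g w).1, (invWord g w).2 ++ [(-e, a⁻¹)])

theorem hnnProd_invWord (a : Γ) (w : List (ℤ × Γ)) :
    hnnProd t (invWord a w).1 (invWord a w).2 = (hnnProd t a w)⁻¹ := by
  induction w generalizing a with
  | nil => simp [invWord]
  | cons p w ih =>
    obtain ⟨e, g⟩ := p
    rw [invWord, hnnProd_append, ih, hnnProd_cons, hnnProd_cons, hnnProd_nil]
    group

theorem invWord_getLast (a : Γ) {w : List (ℤ × Γ)} {f : ℤ} {z : Γ}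
    (h : w.head? = some (f, z)) : (invWord a w).2.getLast? = some (-f, a⁻¹) := by
  cases w with
  | nil => simp at h
  | cons p w =>
    obtain rfl := Option.some_injective _ h
    simp [invWord]

theorem invWord_of_getLast {w : List (ℤ × Γ)} {e : ℤ} {g : Γ}
    (h : w.getLast? = some (e, g)) (a : Γ) :
    (invWord a w).1 = g⁻¹ ∧ ∃ y, (invWord a w).2.head? = some (-e, y) := by
  induction w generalizing a with
  | nil => simp at h
  | cons p w ih =>
    obtain ⟨e', g'⟩ := p
    cases w with
    | nil =>
      obtain ⟨rfl, rfl⟩ : e' = e ∧ g' = g := by simpa using h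
      exact ⟨rfl, a⁻¹, rfl⟩
    | cons q w =>
      obtain ⟨hfst, y, hy⟩ := ih (by simpa using h) g'
      exact ⟨hfst, y, by rw [invWord, List.head?_append, hy]; rfl⟩

theorem HNNReducedWord.inv {a : Γ} {w : List (ℤ × Γ)} (h : HNNReducedWord A Cm Cp a w) :
    HNNReducedWord A Cm Cp (invWord a w).1 (invWord a w).2 := by
  induction w generalizing a with
  | nil => exact ⟨inv_mem h.1, by simp [invWord], List.isChain_nil⟩
  | cons p w ih =>
    obtain ⟨e, g⟩ := p
    have hw := ih h.of_cons
    have he := (h.2.1 (e, g) List.mem_cons_self).1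
    refine hw.append (b := (invWord g w).1)
      ⟨hw.1, fun p hp => by obtain rfl := List.mem_singleton.1 hp; exact ⟨by omega, inv_mem h.1⟩,
        List.isChain_singleton _⟩ ?_
    intro x hx y hy hyx hxC
    obtain ⟨q, w', rfl⟩ : ∃ q w', w = q :: w' := by
      cases w with
      | nil => simp [invWord] at hx
      | cons q w' => exact ⟨q, w', rfl⟩
    rw [invWord_getLast g rfl, Option.mem_some_iff] at hx
    obtain rfl := Option.mem_some_iff.1 hy
    subst hx
    refine List.isChain_cons_cons.1 h.2.2 |>.1 (by simp only at hyx ⊢; omega) ?_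
    simpa [show -q.1 = e by simp only at hyx; omega] using hxC

theorem IsHNN.pinch_of_hnnProd_mul_eq_one (hH : IsHNN A Cm Cp t) {a b x y : Γ} {e f : ℤ}
    {u v : List (ℤ × Γ)} (hu : HNNReducedWord A Cm Cp a u) (hv : HNNReducedWord A Cm Cp b v)
    (hx : u.getLast? = some (e, x)) (hy : v.head? = some (f, y))
    (h : hnnProd t a u * hnnProd t b v = 1) : f = -e ∧ x * b ∈ toCsub Cm Cp e := by
  obtain ⟨u₀, rfl⟩ := List.getLast?_eq_some_iff.1 hx
  obtain ⟨v₀, rfl⟩ : ∃ v₀, v = (f, y) :: v₀ := by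
    cases v with
    | nil => simp at hy
    | cons q v₀ => exact ⟨v₀, by simpa using hy⟩
  by_contra hpinch
  have hxb : x * b ∈ A := mul_mem (hu.2.1 (e, x) (by simp)).2 hv.1
  refine hH.hnnProd_ne_one ((hu.replace_last hxb).append hv ?_) (by simp) ?_
  · simpa using fun hf hC => hpinch ⟨hf, hC⟩
  · rw [← h]
    simp [hnnProd, mul_assoc]

theorem HNNReducedWord.exists_conj_word {a g c : Γ} {e : ℤ} {u : List (ℤ × Γ)}
    (hred : HNNReducedWord A Cm Cp a (u ++ [(e, g)])) (hc : c ∈ A)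
    (hcC : c ∉ toCsub Cm Cp e) :
    ∃ L f z, HNNReducedWord A Cm Cp a L ∧
      hnnProd t a L = hnnProd t a u * t ^ e * c * (hnnProd t a u * t ^ e)⁻¹ ∧
      L.head? = some (f, z) ∧ L.getLast? = some (-f, a⁻¹) := by
  obtain ⟨hinv₁, y, hy⟩ := invWord_of_getLast (List.getLast?_concat (l := u)) a
  obtain ⟨f, z, z', hhead₁, hhead⟩ : ∃ f z z', (u ++ [(e, 1)]).head? = some (f, z) ∧
      (u ++ [(e, c)] ++ (invWord a (u ++ [(e, 1)])).2).head? = some (f, z') := by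
    cases u with
    | nil => exact ⟨e, 1, c, rfl, rfl⟩
    | cons q u => exact ⟨q.1, q.2, q.2, rfl, rfl⟩
  refine ⟨_, f, z', (hred.replace_last hc).append (hred.replace_last (one_mem A)).inv
    (by simp [hcC]), ?_, hhead, ?_⟩
  · have hinvprod := hnnProd_invWord (t := t) a (u ++ [(e, 1)])
    rw [hinv₁, inv_one] at hinvprod
    rw [hnnProd_append, hinvprod]
    simp [hnnProd_append, hnnProd_cons, mul_assoc]
  · rw [List.getLast?_append, invWord_getLast a hhead₁]
    rfl

theorem IsHNN.mem_toCsub_of_conj_cyclicallyReduced (hH : IsHNN A Cm Cp t) {γ a g c : Γ}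
    {e : ℤ} {u : List (ℤ × Γ)} (hcyc : HNNCyclicallyReduced A Cm Cp t γ)
    (hred : HNNReducedWord A Cm Cp a (u ++ [(e, g)])) (hc : c ∈ A)
    (hγ : γ = hnnProd t a u * t ^ e * c * (hnnProd t a u * t ^ e)⁻¹) :
    c ∈ toCsub Cm Cp e := by
  by_contra hcC
  obtain ⟨L, f, z, hL, hLγ, hLhead, hLlast⟩ := hred.exists_conj_word (t := t) hc hcC
  rw [← hγ] at hLγ
  rcases hcyc with hγA | ⟨g₀, w, hw, hwγ, ⟨p₁, p₂⟩, q, hq, hp, rfl, hlen⟩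
  · refine hH.hnnProd_ne_one ⟨mul_mem (inv_mem hγA) hL.1, hL.2⟩
      (List.ne_nil_of_mem (List.mem_of_mem_head? hLhead)) ?_
    rw [hnnProd_eq_mul, mul_assoc, ← hnnProd_eq_mul, hLγ, inv_mul_cancel]
  obtain ⟨hwinv₁, y, hy⟩ := invWord_of_getLast hp g₀
  -- the pinches forced where the reduced words meet in `γ⁻¹ * γ` and in `γ * γ⁻¹`
  obtain ⟨hfq, hg₀a⟩ := hH.pinch_of_hnnProd_mul_eq_one hw.inv hL (invWord_getLast g₀ hq)
    hLhead (by rw [hnnProd_invWord, hLγ, hwγ, inv_mul_cancel])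
  obtain ⟨hpf, ha⟩ := hH.pinch_of_hnnProd_mul_eq_one hL hw.inv hLlast hy
    (by rw [hnnProd_invWord, hLγ, hwγ, mul_inv_cancel])
  have hq₁ : q.1 = 1 ∨ q.1 = -1 := (hw.2.1 q (List.mem_of_mem_head? hq)).1
  rcases hlen with hlen | hnp
  · obtain ⟨r, rfl⟩ := List.length_eq_one_iff.1 hlen
    obtain rfl : q = (p₁, 1) := by simp_all
    simp only at hfq hpf
    omega
  · refine hnp ⟨by simp only at hfq hpf ⊢; omega, ?_⟩
    rw [hwinv₁, inv_one, mul_one] at ha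
    rw [show -q.1 = -f by omega] at hg₀a
    have : g₀⁻¹ ∈ toCsub Cm Cp (-f) := by simpa using mul_mem hg₀a ha
    rw [show (p₁, (1 : Γ)).1 = -f by simp only; omega]
    exact inv_mem_iff.1 this

def conjBySuffix (t co : Γ) (u : List (ℤ × Γ)) (k : ℕ) : Γ :=
  hnnProd t 1 (u.drop k) * co * (hnnProd t 1 (u.drop k))⁻¹

theorem conjBySuffix_length (co : Γ) (u : List (ℤ × Γ)) : conjBySuffix t co u u.length = co := by
  simp [conjBySuffix]

theorem hnnProd_conj_eq_conjBySuffix_zero (a co : Γ) (u : List (ℤ × Γ)) :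
    hnnProd t a u * co * (hnnProd t a u)⁻¹ = a * conjBySuffix t co u 0 * a⁻¹ := by
  rw [conjBySuffix, List.drop_zero, hnnProd_eq_mul a]
  group

theorem conjBySuffix_of_lt (co : Γ) {u : List (ℤ × Γ)} {k : ℕ} (hk : k < u.length) :
    conjBySuffix t co u k =
      t ^ u[k].1 * (u[k].2 * conjBySuffix t co u (k + 1) * u[k].2⁻¹) * (t ^ u[k].1)⁻¹ := by
  rw [conjBySuffix, List.drop_eq_getElem_cons hk, hnnProd_cons, hnnProd_eq_mul u[k].2,
    conjBySuffix]
  group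

variable {γ a co : Γ} {u : List (ℤ × Γ)}

theorem IsHNN.conj_conjBySuffix_mem_toCsub (hH : IsHNN A Cm Cp t)
    (hcyc : HNNCyclicallyReduced A Cm Cp t γ) (hred : HNNReducedWord A Cm Cp a u)
    (hγ : γ = hnnProd t a u * co * (hnnProd t a u)⁻¹) {k : ℕ} (hk : k < u.length)
    (hA : conjBySuffix t co u (k + 1) ∈ A) :
    u[k].2 * conjBySuffix t co u (k + 1) * u[k].2⁻¹ ∈ toCsub Cm Cp u[k].1 := by
  have hgA : u[k].2 ∈ A := (hred.2.1 _ (List.getElem_mem hk)).2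
  have hprefix : HNNReducedWord A Cm Cp a (u.take k ++ [u[k]]) := by
    rw [List.take_concat_get' u k hk]
    exact hred.take (k + 1)
  refine hH.mem_toCsub_of_conj_cyclicallyReduced hcyc hprefix
    (mul_mem (mul_mem hgA hA) (inv_mem hgA)) ?_
  have hsplit : hnnProd t a u = hnnProd t a (u.take k) * hnnProd t 1 (u.drop k) := by
    rw [← hnnProd_append, List.take_append_drop]
  rw [hγ, hsplit, List.drop_eq_getElem_cons hk, hnnProd_cons, hnnProd_eq_mul u[k].2,
    conjBySuffix]
  group

theorem IsHNN.conjBySuffix_mem (hH : IsHNN A Cm Cp t) (hcyc : HNNCyclicallyReduced A Cm Cp t γ)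
    (hred : HNNReducedWord A Cm Cp a u) (hγ : γ = hnnProd t a u * co * (hnnProd t a u)⁻¹)
    (hco : co ∈ A) {k : ℕ} (hk : k ≤ u.length) : conjBySuffix t co u k ∈ A := by
  induction hk using Nat.decreasingInduction with
  | self => rwa [conjBySuffix_length]
  | of_succ k hk ih =>
    rw [conjBySuffix_of_lt co hk]
    exact hH.toCsub_le _ (hH.zpow_conj_mem_toCsub_neg (hred.2.1 _ (List.getElem_mem hk)).1
      (hH.conj_conjBySuffix_mem_toCsub hcyc hred hγ hk ih))

theorem IsHNN.exists_conj_chain (hH : IsHNN A Cm Cp t) (hcyc : HNNCyclicallyReduced A Cm Cp t γ)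
    (hred : HNNReducedWord A Cm Cp a u) (hco : co ∈ (Cp : Set Γ) ∪ (Cm : Set Γ))
    (hγ : γ = hnnProd t a u * co * (hnnProd t a u)⁻¹) :
    γ ∈ A ∧ ∃ c : ℕ → Γ, (∀ i ≤ 2 * u.length, c i ∈ (Cp : Set Γ) ∪ (Cm : Set Γ)) ∧
      c (2 * u.length) = co ∧ γ = a * c 0 * a⁻¹ ∧
      ∀ i (hi : i < u.length),
        c (2 * i + 1) = u[i].2 * c (2 * i + 2) * u[i].2⁻¹ ∧
        c (2 * i) = t ^ u[i].1 * c (2 * i + 1) * (t ^ u[i].1)⁻¹ := by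
  have hx : ∀ k ≤ u.length, conjBySuffix t co u k ∈ A :=
    fun k hk => hH.conjBySuffix_mem hcyc hred hγ (hH.union_subset hco) hk
  have hy : ∀ k (hk : k < u.length),
      u[k].2 * conjBySuffix t co u (k + 1) * u[k].2⁻¹ ∈ toCsub Cm Cp u[k].1 :=
    fun k hk => hH.conj_conjBySuffix_mem_toCsub hcyc hred hγ hk (hx _ hk)
  have hx_mem : ∀ k (hk : k < u.length), conjBySuffix t co u k ∈ toCsub Cm Cp (-u[k].1) :=
    fun k hk => by
      rw [conjBySuffix_of_lt co hk]
      exact hH.zpow_conj_mem_toCsub_neg (hred.2.1 _ (List.getElem_mem hk)).1 (hy k hk)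
  let c : ℕ → Γ := fun n =>
    if n % 2 = 0 then conjBySuffix t co u (n / 2)
    else
      (u.getD (n / 2) (0, 1)).2 * conjBySuffix t co u (n / 2 + 1) * (u.getD (n / 2) (0, 1)).2⁻¹
  have hc_even : ∀ i, c (2 * i) = conjBySuffix t co u i := fun i => by simp [c]
  have hc_odd : ∀ i (hi : i < u.length),
      c (2 * i + 1) = u[i].2 * conjBySuffix t co u (i + 1) * u[i].2⁻¹ := fun i hi => by
    have h2 : (2 * i + 1) / 2 = i := by omega
    simp [c, h2, List.getElem?_eq_getElem hi]
  refine ⟨?_, c, fun n hn => ?_, by rw [hc_even, conjBySuffix_length], ?_, fun i hi => ?_⟩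
  · rw [hγ, hnnProd_conj_eq_conjBySuffix_zero]
    exact mul_mem (mul_mem hred.1 (hx 0 (Nat.zero_le _))) (inv_mem hred.1)
  · obtain ⟨i, rfl | rfl⟩ := Nat.even_or_odd' n
    · rw [hc_even]
      rcases (show i < u.length ∨ i = u.length by omega) with hi | rfl
      · exact toCsub_subset_union _ (hx_mem i hi)
      · rwa [conjBySuffix_length]
    · rw [hc_odd i (by omega)]
      exact toCsub_subset_union _ (hy i (by omega))
  · rw [hγ, hnnProd_conj_eq_conjBySuffix_zero]
    simp [c]
  · rw [hc_odd i hi, show 2 * i + 2 = 2 * (i + 1) by ring, hc_even, hc_even]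
    exact ⟨rfl, conjBySuffix_of_lt co hi⟩

end HNNWords

/-- In the paper's indexing, `hs i` is `h_{i+2}` and `ε i` is `ε_{i+1}`. -/
theorem hnn_conj_into_associated_subgroup (A Cm Cp : Subgroup Γ) (t : Γ)
    (hH : IsHNN A Cm Cp t) (γ co h : Γ) (p : ℕ)
    (h1 : Γ) (ε : Fin p → ℤ) (hs : Fin p → Γ)
    (hred : HNNReducedWord A Cm Cp h1 (List.ofFn fun i => (ε i, hs i)))
    (hprod : hnnProd t h1 (List.ofFn fun i => (ε i, hs i)) = h)
    (hcyc : HNNCyclicallyReduced A Cm Cp t γ)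
    (hco : co ∈ (Cp : Set Γ) ∪ (Cm : Set Γ))
    (hconj : γ = h * co * h⁻¹) :
    γ ∈ A ∧
      ∃ c : ℕ → Γ, (∀ i ≤ 2 * p, c i ∈ (Cp : Set Γ) ∪ (Cm : Set Γ)) ∧
        c (2 * p) = co ∧ γ = h1 * c 0 * h1⁻¹ ∧
        ∀ i : Fin p,
          c (2 * (i : ℕ) + 1) = hs i * c (2 * (i : ℕ) + 2) * (hs i)⁻¹ ∧
          c (2 * (i : ℕ)) = t ^ ε i * c (2 * (i : ℕ) + 1) * (t ^ ε i)⁻¹ := by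
  subst hprod
  obtain ⟨hγA, c, hc, hclast, hc0, hstep⟩ := hH.exists_conj_chain hcyc hred hco hconj
  rw [List.length_ofFn] at hc hclast
  exact ⟨hγA, c, hc, hclast, hc0, fun i => by simpa using hstep i (by simp)⟩
end

section
/- Let Γ = A*_φ with C_{-1} = C_{+1} = A, so φ is an automorphism of A. If the image of φ in the outer automorphism group Out(A) has infinite order, then the center of Γ equals Z(A) ∩ Fix φ. -/
/-!
Internal characterization of the HNN extension `Γ = A*_φ`:
`A` is a subgroup of `Γ`, `t ∈ Γ` is the stable letter, `Cm = C_{-1}` and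
`Cp = C_{+1}` are subgroups of `A` with `t⁻¹ Cm t = Cp` (so
`φ(c) = t⁻¹ c t` for `c ∈ Cm`), `A ∪ {t}` generates `Γ`, and Britton's lemma
holds: a reduced word `g₀ t^{ε₁} g₁ ⋯ t^{εₙ} gₙ` with `n ≥ 1` is nontrivial.
-/

variable {Γ : Type*} [Group Γ]

/-!
Since `C_{-1} = C_{+1} = A`, the stable letter normalizes `A`, so every element of `Γ` is
`t ^ n * a` with `a ∈ A`. If such an element is central, then `φ ^ n = (b ↦ t⁻ⁿ b tⁿ)` is
the inner automorphism `b ↦ a b a⁻¹` of `A`, so infinite order of `φ` in `Out(A)` forces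
`n = 0`.
Conversely, an element commuting with the generators `A ∪ {t}` is central.
-/

open Subgroup

/-- Conjugation by `x` restricts to an inner automorphism of `A`; for `x = t ^ n` this says that
`φ ^ n` is trivial in `Out(A)`. -/
def IsInnerOn (A : Subgroup Γ) (x : Γ) : Prop :=
  ∃ a₀ ∈ A, ∀ a ∈ A, x⁻¹ * a * x = a₀ * a * a₀⁻¹

namespace IsInnerOn

variable {A : Subgroup Γ} {x : Γ}

theorem inv (h : IsInnerOn A x) : IsInnerOn A x⁻¹ := by
  obtain ⟨a₀, ha₀, hx⟩ := h
  refine ⟨a₀⁻¹, inv_mem ha₀, fun a ha => ?_⟩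
  have := hx (a₀⁻¹ * a * a₀) (mul_mem (mul_mem (inv_mem ha₀) ha) ha₀)
  rw [inv_inv, inv_inv]
  calc x * a * x⁻¹ = x * (x⁻¹ * (a₀⁻¹ * a * a₀) * x) * x⁻¹ := by rw [this]; group
    _ = a₀⁻¹ * a * a₀ := by group

theorem zpow_natAbs {n : ℤ} (h : IsInnerOn A (x ^ n)) : IsInnerOn A (x ^ n.natAbs) := by
  rcases Int.natAbs_eq n with hn | hn
  · rwa [hn, zpow_natCast] at h
  · rw [hn, zpow_neg, zpow_natCast] at h
    simpa using h.inv

end IsInnerOn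

theorem isInnerOn_of_mul_mem_center {A : Subgroup Γ} {x a : Γ} (ha : a ∈ A)
    (h : x * a ∈ center Γ) : IsInnerOn A x := by
  refine ⟨a, ha, fun b _ => ?_⟩
  have hb := mem_center_iff.mp h b
  calc x⁻¹ * b * x = x⁻¹ * (b * (x * a)) * a⁻¹ := by group
    _ = a * b * a⁻¹ := by rw [hb]; group

theorem exists_zpow_mul_eq_of_mem_normalizer {A : Subgroup Γ} {t : Γ}
    (ht : t ∈ normalizer (A : Set Γ)) (hgen : closure ((A : Set Γ) ∪ {t}) = ⊤)
    (g : Γ) : ∃ n : ℤ, ∃ a ∈ A, t ^ n * a = g := by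
  have hsup : zpowers t ⊔ A = ⊤ := by
    rw [← hgen, Subgroup.closure_union, closure_eq, ← zpowers_eq_closure, sup_comm]
  have hg : g ∈ ((zpowers t ⊔ A : Subgroup Γ) : Set Γ) := by rw [hsup]; trivial
  rw [coe_mul_of_left_le_normalizer_right _ _ (zpowers_le.mpr ht)] at hg
  obtain ⟨_, ⟨n, rfl⟩, a, ha, rfl⟩ := hg
  exact ⟨n, a, ha, rfl⟩

theorem mem_center_iff_of_closure_eq_top {s : Set Γ} (hs : closure s = ⊤) {g : Γ} :
    g ∈ center Γ ↔ ∀ x ∈ s, x * g = g * x := by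
  simp [center_eq_iInf hs, mem_centralizer_singleton_iff, eq_comm]

/-- Center of an HNN extension, case (ii): if `C_{-1} = C_{+1} = A` (so
`φ : a ↦ t⁻¹ a t` is an automorphism of `A`) and `φ` has infinite order in
`Out(A)` (no positive power of `φ` is inner), then the center of `Γ` is
`Z(A) ∩ Fix φ`. -/
theorem hnn_center_infinite_order (A Cm Cp : Subgroup Γ) (t : Γ)
    (hH : IsHNN A Cm Cp t) (hCm : Cm = A) (hCp : Cp = A)
    (hinf : ∀ n : ℕ, 0 < n →
      ¬∃ a₀ ∈ A, ∀ a ∈ A, (t ^ n)⁻¹ * a * t ^ n = a₀ * a * a₀⁻¹) :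
    (Subgroup.center Γ : Set Γ) =
      {g : Γ | (g ∈ A ∧ ∀ a ∈ A, g * a = a * g) ∧ t⁻¹ * g * t = g} := by
  obtain ⟨-, -, hconj, hgen, -⟩ := hH
  rw [hCm, hCp] at hconj
  have ht : t ∈ normalizer (A : Set Γ) := mem_normalizer_iff''.mpr hconj
  have hfix : ∀ g, t⁻¹ * g * t = g ↔ t * g = g * t := fun g => by
    rw [mul_assoc, inv_mul_eq_iff_eq_mul, eq_comm]
  ext g
  constructor
  · intro hg
    obtain ⟨n, a, ha, rfl⟩ := exists_zpow_mul_eq_of_mem_normalizer ht hgen g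
    obtain rfl : n = 0 := by
      by_contra hn
      exact hinf n.natAbs (Int.natAbs_pos.mpr hn) (isInnerOn_of_mul_mem_center ha hg).zpow_natAbs
    rw [zpow_zero, one_mul] at hg ⊢
    have hcomm := mem_center_iff.mp hg
    exact ⟨⟨ha, fun b _ => (hcomm b).symm⟩, (hfix a).mpr (hcomm t)⟩
  · rintro ⟨⟨-, hA⟩, htg⟩
    rw [SetLike.mem_coe, mem_center_iff_of_closure_eq_top hgen]
    rintro x (hx | rfl)
    exacts [(hA x hx).symm, (hfix g).mp htg]
end
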